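/- None of the four three-qubit dictatorship states Δ⁺₁, Δ⁻₁, Δ⁺₂, Δ⁻₂ is logically contextual for any choice of dichotomic measurements: for every assignment to each of the three parties of two measurements given by orthonormal bases of Bool → ℂ, and for every context c : Fin 3 → M and every outcome o with nonzero amplitude in c, there exists a consistent global assignment g with g i (c i) = o i for all i. -/
import Mathlib


noncomputable section

/-- Inner product of two `m`-qubit states `(Fin m → Bool) → ℂ`. -/
def inner' {m : ℕ} (φ ψ : (Fin m → Bool) → ℂ) : ℂ :=
  ∑ s : Fin m → Bool, (starRingEnd ℂ) (φ s) * ψ s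

/-- Tensor product of local vectors. -/
def tensor {m : ℕ} (v : Fin m → Bool → ℂ) : (Fin m → Bool) → ℂ :=
  fun s => ∏ i, v i (s i)

/-- Standard inner product on `Bool → ℂ`. -/
def inner1 (u w : Bool → ℂ) : ℂ := ∑ b, (starRingEnd ℂ) (u b) * w b

/-- `(u, w)` form an orthonormal basis of `Bool → ℂ`. -/
def OrthonormalPair (u w : Bool → ℂ) : Prop :=
  inner1 u u = 1 ∧ inner1 w w = 1 ∧ inner1 u w = 0

/-- The dictatorship state `Δ⁺₁` (`s 2` dictated by `s 0`). -/
def DeltaP1 : (Fin 3 → Bool) → ℂ := fun s => if s 2 = s 0 then (1/2 : ℂ) else 0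

/-- The dictatorship state `Δ⁺₂` (`s 2` dictated by `s 1`). -/
def DeltaP2 : (Fin 3 → Bool) → ℂ := fun s => if s 2 = s 1 then (1/2 : ℂ) else 0

/-- The dictatorship state `Δ⁻₁` (`s 2` dictated by `¬ s 0`). -/
def DeltaM1 : (Fin 3 → Bool) → ℂ := fun s => if s 2 = !(s 0) then (1/2 : ℂ) else 0

/-- The dictatorship state `Δ⁻₂` (`s 2` dictated by `¬ s 1`). -/
def DeltaM2 : (Fin 3 → Bool) → ℂ := fun s => if s 2 = !(s 1) then (1/2 : ℂ) else 0

open Matrix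

def IsU (W : Matrix Bool Bool ℂ) : Prop := W * Wᴴ = 1

lemma isU_alt {W : Matrix Bool Bool ℂ} (h : IsU W) : Wᴴ * W = 1 :=
  mul_eq_one_comm.mp h

lemma isU_row {W : Matrix Bool Bool ℂ} (h : IsU W) (x x' : Bool) :
    W x false * (starRingEnd ℂ) (W x' false) + W x true * (starRingEnd ℂ) (W x' true)
      = if x = x' then 1 else 0 := by
  have := congrFun (congrFun h x) x'
  simpa [Matrix.mul_apply, Matrix.conjTranspose_apply, Fintype.sum_bool,
    Matrix.one_apply, add_comm] using this

lemma isU_col {W : Matrix Bool Bool ℂ} (h : IsU W) (y y' : Bool) :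
    (starRingEnd ℂ) (W false y) * W false y' + (starRingEnd ℂ) (W true y) * W true y'
      = if y = y' then 1 else 0 := by
  have := congrFun (congrFun (isU_alt h) y) y'
  simpa [Matrix.mul_apply, Matrix.conjTranspose_apply, Fintype.sum_bool,
    Matrix.one_apply, add_comm] using this

lemma isU_row_ex {W : Matrix Bool Bool ℂ} (h : IsU W) (x : Bool) : ∃ y, W x y ≠ 0 := by
  by_contra hc
  push_neg at hc
  have := isU_row h x x
  simp [hc] at this

lemma isU_col_ex {W : Matrix Bool Bool ℂ} (h : IsU W) (y : Bool) : ∃ x, W x y ≠ 0 := by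
  by_contra hc
  push_neg at hc
  have := isU_col h y y
  simp [hc] at this

lemma conj_mul_self_eq_zero {z : ℂ} (h : z * (starRingEnd ℂ) z = 0) : z = 0 := by
  rcases mul_eq_zero.mp h with h | h
  · exact h
  · exact (map_eq_zero (starRingEnd ℂ)).mp h

/-- If a 2×2 unitary has a zero entry, its support is the graph of a bijection. -/
lemma isU_pattern {W : Matrix Bool Bool ℂ} (h : IsU W) {x y : Bool} (hz : W x y = 0) :
    ∃ e : Bool, ∀ a b, W a b ≠ 0 ↔ xor a b = e := by
  -- column y : the other entry is nonzero
  have hcol := isU_col h y y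
  have hrow := isU_row h (!x) (!x)
  have hrowx := isU_row h x x
  have h1 : W (!x) y ≠ 0 := by
    intro h0
    cases x <;> simp_all
  have h2 : W (!x) (!y) = 0 := by
    have hc : (starRingEnd ℂ) (W (!x) y) * W (!x) y = 1 := by
      cases x <;> simp_all
    have : W (!x) (!y) * (starRingEnd ℂ) (W (!x) (!y)) = 0 := by
      cases y <;> cases x <;> simp_all [mul_comm]
    exact conj_mul_self_eq_zero this
  have h3 : W x (!y) ≠ 0 := by
    intro h0
    cases y <;> simp_all
  refine ⟨!(xor x y), fun a b => ?_⟩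
  have hx := Bool.not_ne_self x
  cases a <;> cases b <;> cases x <;> cases y <;> simp_all
lemma isU_mul {A B : Matrix Bool Bool ℂ} (hA : IsU A) (hB : IsU B) : IsU (A * B) := by
  unfold IsU at *
  rw [Matrix.conjTranspose_mul, Matrix.mul_assoc, ← Matrix.mul_assoc B, hB,
    Matrix.one_mul, hA]

lemma key {P P' Q Q' : Matrix Bool Bool ℂ}
    (hP : IsU P) (hP' : IsU P') (hQ : IsU Q) (hQ' : IsU Q')
    {o0 o2 : Bool} (h : (P * Q) o0 o2 ≠ 0) :
    ∃ x1 y1, (P * Q') o0 y1 ≠ 0 ∧ (P' * Q) x1 o2 ≠ 0 ∧ (P' * Q') x1 y1 ≠ 0 := by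
  have hM'U : IsU (P * Q') := isU_mul hP hQ'
  have hNU : IsU (P' * Q) := isU_mul hP' hQ
  have hN'U : IsU (P' * Q') := isU_mul hP' hQ'
  by_cases hM'f : ∀ a b, (P * Q') a b ≠ 0
  · obtain ⟨x1, hx1⟩ := isU_col_ex hNU o2
    obtain ⟨y1, hy1⟩ := isU_row_ex hN'U x1
    exact ⟨x1, y1, hM'f o0 y1, hx1, hy1⟩
  push_neg at hM'f
  obtain ⟨a', b', hzM'⟩ := hM'f
  obtain ⟨e', hpM'⟩ := isU_pattern hM'U hzM'
  by_cases hNf : ∀ a b, (P' * Q) a b ≠ 0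
  · obtain ⟨y1, hy1⟩ := isU_row_ex hM'U o0
    obtain ⟨x1, hx1⟩ := isU_col_ex hN'U y1
    exact ⟨x1, y1, hy1, hNf x1 o2, hx1⟩
  push_neg at hNf
  obtain ⟨a, b, hzN⟩ := hNf
  obtain ⟨e, hpN⟩ := isU_pattern hNU hzN
  -- both patterned: parity argument using P'Q' = (P'Q) (PQ)ᴴ (PQ')
  have hid : P' * Q' = (P' * Q) * (P * Q)ᴴ * (P * Q') := by
    rw [Matrix.conjTranspose_mul]
    calc P' * Q' = P' * ((Q * Qᴴ) * ((Pᴴ * P) * Q')) := by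
          rw [hQ, isU_alt hP, Matrix.one_mul, Matrix.one_mul]
      _ = P' * Q * (Qᴴ * Pᴴ) * (P * Q') := by simp only [Matrix.mul_assoc]
  have hNz : ∀ u, u ≠ o2 → (P' * Q) (xor o2 e) u = 0 := by
    intro u hu
    by_contra hc
    have := (hpN _ u).mp hc
    cases o2 <;> cases e <;> cases u <;> simp_all
  have hM'z : ∀ w, w ≠ o0 → (P * Q') w (xor o0 e') = 0 := by
    intro w hw
    by_contra hc
    have := (hpM' w _).mp hc
    cases o0 <;> cases e' <;> cases w <;> simp_all
  refine ⟨xor o2 e, xor o0 e', ?_, ?_, ?_⟩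
  · exact (hpM' o0 (xor o0 e')).mpr (by cases o0 <;> cases e' <;> rfl)
  · exact (hpN (xor o2 e) o2).mpr (by cases o2 <;> cases e <;> rfl)
  · have expand : ∀ (X Y Z : Matrix Bool Bool ℂ) (i j : Bool),
        (X * Yᴴ * Z) i j
          = X i false * (starRingEnd ℂ) (Y false false) * Z false j
            + X i false * (starRingEnd ℂ) (Y true false) * Z true j
            + X i true * (starRingEnd ℂ) (Y false true) * Z false j
            + X i true * (starRingEnd ℂ) (Y true true) * Z true j := by
      intro X Y Z i j
      simp only [Matrix.mul_apply, Matrix.conjTranspose_apply, Fintype.sum_bool,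
        starRingEnd_apply]
      ring
    have hval : (P' * Q') (xor o2 e) (xor o0 e')
        = (P' * Q) (xor o2 e) o2 * (starRingEnd ℂ) ((P * Q) o0 o2)
            * (P * Q') o0 (xor o0 e') := by
      conv_lhs => rw [hid]
      rw [expand (P' * Q) (P * Q) (P * Q') (xor o2 e) (xor o0 e')]
      rcases o2 with _ | _ <;> rcases o0 with _ | _
      · rw [hM'z true (by simp), hNz true (by simp)]
        ring
      · rw [hM'z false (by simp), hNz true (by simp)]
        ring
      · rw [hM'z true (by simp), hNz false (by simp)]
        ring
      · rw [hM'z false (by simp), hNz false (by simp)]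
        ring
    rw [hval]
    refine mul_ne_zero (mul_ne_zero ?_ ?_) ?_
    · exact (hpN (xor o2 e) o2).mpr (by cases o2 <;> cases e <;> rfl)
    · simpa using h
    · exact (hpM' o0 (xor o0 e')).mpr (by cases o0 <;> cases e' <;> rfl)
def e3 : Bool × Bool × Bool ≃ (Fin 3 → Bool) where
  toFun x := ![x.1, x.2.1, x.2.2]
  invFun s := (s 0, s 1, s 2)
  left_inv := by rintro ⟨a, b, c⟩; rfl
  right_inv := by intro s; funext i; fin_cases i <;> rfl

lemma sum_fin3 (F : (Fin 3 → Bool) → ℂ) :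
    ∑ s : Fin 3 → Bool, F s = ∑ x : Bool × Bool × Bool, F ![x.1, x.2.1, x.2.2] :=
  (Equiv.sum_comp e3 F).symm

lemma fact01 (ε : Bool) (w : Fin 3 → Bool → ℂ) :
    inner' (tensor w) (fun s => if s 2 = xor ε (s 0) then (1/2 : ℂ) else 0)
      = (1/2) * (((starRingEnd ℂ) (w 1 false) + (starRingEnd ℂ) (w 1 true))
          * ∑ a : Bool, (starRingEnd ℂ) (w 0 a) * (starRingEnd ℂ) (w 2 (xor ε a))) := by
  rw [inner', sum_fin3]
  simp only [Fintype.sum_prod_type, Fintype.sum_bool, tensor, Fin.prod_univ_three,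
    Matrix.cons_val_zero, Matrix.cons_val_one, Matrix.head_cons, Matrix.cons_val_two,
    Matrix.tail_cons, _root_.map_mul]
  cases ε <;> simp <;> ring

lemma fact10 (ε : Bool) (w : Fin 3 → Bool → ℂ) :
    inner' (tensor w) (fun s => if s 2 = xor ε (s 1) then (1/2 : ℂ) else 0)
      = (1/2) * (((starRingEnd ℂ) (w 0 false) + (starRingEnd ℂ) (w 0 true))
          * ∑ a : Bool, (starRingEnd ℂ) (w 1 a) * (starRingEnd ℂ) (w 2 (xor ε a))) := by
  rw [inner', sum_fin3]
  simp only [Fintype.sum_prod_type, Fintype.sum_bool, tensor, Fin.prod_univ_three,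
    Matrix.cons_val_zero, Matrix.cons_val_one, Matrix.head_cons, Matrix.cons_val_two,
    Matrix.tail_cons, _root_.map_mul]
  cases ε <;> simp <;> ring

lemma pair_sum_ne {u w : Bool → ℂ} (h : OrthonormalPair u w) :
    ¬((starRingEnd ℂ) (u false) + (starRingEnd ℂ) (u true) = 0 ∧
      (starRingEnd ℂ) (w false) + (starRingEnd ℂ) (w true) = 0) := by
  obtain ⟨h1, h2, h3⟩ := h
  rintro ⟨ha, hb⟩
  rw [inner1, Fintype.sum_bool] at h1 h2 h3
  have hu : (starRingEnd ℂ) (u true) = -(starRingEnd ℂ) (u false) := by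
    linear_combination ha
  have hw : w true = - w false := by
    have := congrArg (starRingEnd ℂ) hb
    simp only [map_add, Complex.conj_conj, map_zero] at this
    linear_combination this
  rw [hu, hw] at h3
  have hmul : (starRingEnd ℂ) (u false) * w false = 0 := by linear_combination h3 / 2
  rcases mul_eq_zero.mp hmul with hz | hz
  · have hu0 : u false = 0 := (map_eq_zero (starRingEnd ℂ)).mp hz
    have hut : u true = 0 := by
      have h5 : (starRingEnd ℂ) (u true) = 0 := by rw [hu, hz, neg_zero]
      exact (map_eq_zero (starRingEnd ℂ)).mp h5
    rw [hu0, hut] at h1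
    simp at h1
  · rw [hz, hw, hz] at h2
    simp at h2

lemma isU_rowM (u : Bool → Bool → ℂ) (h : OrthonormalPair (u false) (u true)) :
    IsU (Matrix.of fun x t => (starRingEnd ℂ) (u x t)) := by
  obtain ⟨h1, h2, h3⟩ := h
  have h4 : inner1 (u true) (u false) = 0 := by
    have := congrArg (starRingEnd ℂ) h3
    simpa [inner1, Fintype.sum_bool, map_add, _root_.map_mul, mul_comm, add_comm] using this
  unfold IsU
  ext x y
  rw [Matrix.mul_apply, Fintype.sum_bool]
  simp only [Matrix.conjTranspose_apply, Matrix.of_apply, Complex.conj_conj, Matrix.one_apply]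
  rw [inner1, Fintype.sum_bool] at h1 h2 h3 h4
  cases x <;> cases y
  · simpa using h1
  · simpa using h3
  · simpa using h4
  · simpa using h2

lemma isU_transpose {W : Matrix Bool Bool ℂ} (h : IsU W) : IsU Wᵀ := by
  have halt := isU_alt h
  unfold IsU
  ext x y
  have h1 := congrFun (congrFun halt x) y
  rw [Matrix.mul_apply, Fintype.sum_bool] at h1
  simp only [Matrix.conjTranspose_apply] at h1
  have h2 := congrArg (starRingEnd ℂ) h1
  simp only [map_add, _root_.map_mul, Complex.conj_conj, starRingEnd_apply, star_star] at h2
  rw [Matrix.mul_apply, Fintype.sum_bool]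
  simp only [Matrix.conjTranspose_apply, Matrix.transpose_apply, starRingEnd_apply]
  rw [h2]
  simp [Matrix.one_apply, apply_ite]
lemma fin3_resolve (i p f : Fin 3) (h1 : p ≠ f) (h2 : p ≠ 2) (h3 : f ≠ 2)
    (h4 : i ≠ p) (h5 : i ≠ f) : i = 2 := by
  revert h1 h2 h3 h4 h5
  revert i p f
  decide

lemma main_core (v : Fin 3 → Bool → Bool → Bool → ℂ)
    (hv : ∀ i m, OrthonormalPair (v i m false) (v i m true))
    (ψ : (Fin 3 → Bool) → ℂ) (p f : Fin 3) (ε : Bool)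
    (hpf : p ≠ f) (hp2 : p ≠ 2) (hf2 : f ≠ 2)
    (hfact : ∀ w : Fin 3 → Bool → ℂ,
      inner' (tensor w) ψ
        = (1/2) * (((starRingEnd ℂ) (w f false) + (starRingEnd ℂ) (w f true))
            * ∑ a : Bool, (starRingEnd ℂ) (w p a) * (starRingEnd ℂ) (w 2 (xor ε a))))
    (c o : Fin 3 → Bool)
    (ho : inner' (tensor fun i => v i (c i) (o i)) ψ ≠ 0) :
    ∃ g : Fin 3 → Bool → Bool,
      (∀ c' : Fin 3 → Bool,
        inner' (tensor fun i => v i (c' i) (g i (c' i))) ψ ≠ 0) ∧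
      ∀ i, g i (c i) = o i := by
  classical
  -- matrices for the entangled pair (parties p and 2)
  set A : Bool → Matrix Bool Bool ℂ :=
    fun m => Matrix.of fun x t => (starRingEnd ℂ) (v p m x t) with hA
  set B : Bool → Matrix Bool Bool ℂ :=
    fun n => (Matrix.of fun y t => (starRingEnd ℂ) (v 2 n y (xor ε t)))ᵀ with hB
  have hAU : ∀ m, IsU (A m) := fun m => isU_rowM _ (hv p m)
  have hBU : ∀ n, IsU (B n) := by
    intro n
    apply isU_transpose
    apply isU_rowM (fun y t => v 2 n y (xor ε t))
    obtain ⟨h1, h2, h3⟩ := hv 2 n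
    cases ε
    · exact ⟨by simpa [inner1] using h1, by simpa [inner1] using h2,
        by simpa [inner1] using h3⟩
    · refine ⟨?_, ?_, ?_⟩ <;>
        [skip; skip; skip] <;>
        · rw [inner1, Fintype.sum_bool]
          rw [inner1, Fintype.sum_bool] at h1 h2 h3
          simp only [Bool.true_xor, Bool.not_true, Bool.not_false]
          first
            | linear_combination h1
            | linear_combination h2
            | linear_combination h3
  have hAB : ∀ m n x y,
      (∑ a : Bool, (starRingEnd ℂ) (v p m x a) * (starRingEnd ℂ) (v 2 n y (xor ε a)))
        = (A m * B n) x y := by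
    intro m n x y
    rw [Matrix.mul_apply]
    apply Finset.sum_congr rfl
    intro t _
    simp [hA, hB]
  -- decompose the hypothesis ho
  rw [hfact] at ho
  have hCf : (starRingEnd ℂ) (v f (c f) (o f) false)
      + (starRingEnd ℂ) (v f (c f) (o f) true) ≠ 0 := by
    intro hz
    apply ho
    rw [hz]
    ring
  have hpair : (A (c p) * B (c 2)) (o p) (o 2) ≠ 0 := by
    rw [← hAB]
    intro hz
    apply ho
    rw [hz]
    ring
  obtain ⟨x1, y1, hk1, hk2, hk3⟩ :=
    key (hAU (c p)) (hAU (!(c p))) (hBU (c 2)) (hBU (!(c 2))) hpair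
  set g0 : Bool → Bool := fun m => if m = c p then o p else x1 with hg0
  set g2 : Bool → Bool := fun n => if n = c 2 then o 2 else y1 with hg2
  have hpairAll : ∀ m n, (A m * B n) (g0 m) (g2 n) ≠ 0 := by
    intro m n
    have hm : m = c p ∨ m = !(c p) := by cases m <;> cases hcp : c p <;> simp [hcp]
    have hn : n = c 2 ∨ n = !(c 2) := by cases n <;> cases hc2 : c 2 <;> simp [hc2]
    have hne : (!(c p)) ≠ c p := by cases c p <;> simp
    have hne2 : (!(c 2)) ≠ c 2 := by cases c 2 <;> simp
    rcases hm with hm | hm <;> rcases hn with hn | hn <;> subst hm <;> subst hn <;>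
      simp only [hg0, hg2, if_pos rfl, if_neg hne, if_neg hne2]
    · exact hpair
    · exact hk1
    · exact hk2
    · exact hk3
  -- free party
  have hCex : ∀ m, ∃ b, ((starRingEnd ℂ) (v f m b false)
      + (starRingEnd ℂ) (v f m b true) ≠ 0) ∧ (m = c f → b = o f) := by
    intro m
    by_cases hm : m = c f
    · subst hm
      exact ⟨o f, hCf, fun _ => rfl⟩
    · have := pair_sum_ne (hv f m)
      rcases not_and_or.mp this with hz | hz
      · exact ⟨false, hz, fun h => absurd h hm⟩
      · exact ⟨true, hz, fun h => absurd h hm⟩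
  choose gf hgf1 hgf2 using hCex
  refine ⟨fun i => if i = p then g0 else if i = f then gf else g2, ?_, ?_⟩
  · intro c'
    rw [hfact]
    simp only [if_pos rfl, if_neg hpf.symm, if_neg (Ne.symm hp2), if_neg (Ne.symm hf2)]
    refine mul_ne_zero (by norm_num) (mul_ne_zero ?_ ?_)
    · exact hgf1 (c' f)
    · rw [hAB]
      exact hpairAll (c' p) (c' 2)
  · intro i
    by_cases hip : i = p
    · rw [hip]
      simp [hg0]
    · by_cases hif : i = f
      · rw [hif]
        have h5 := hgf2 (c f) rfl
        simp [Ne.symm hpf, h5]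
      · have hi2 : i = 2 := fin3_resolve i p f hpf hp2 hf2 hip hif
        rw [hi2]
        simp [Ne.symm hp2, Ne.symm hf2, hg2]

/-- None of the four three-qubit dictatorship states is logically contextual
for any choice of dichotomic measurements (two orthonormal bases per party, the
measurement set being `Bool`): every possible outcome of every context extends
to a consistent global assignment. -/
theorem dictatorship_not_logically_contextual
    (ψ : (Fin 3 → Bool) → ℂ)
    (hψ : ψ = DeltaP1 ∨ ψ = DeltaP2 ∨ ψ = DeltaM1 ∨ ψ = DeltaM2)
    (v : Fin 3 → Bool → Bool → Bool → ℂ)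
    (hv : ∀ i m, OrthonormalPair (v i m false) (v i m true))
    (c : Fin 3 → Bool) (o : Fin 3 → Bool)
    (ho : inner' (tensor fun i => v i (c i) (o i)) ψ ≠ 0) :
    ∃ g : Fin 3 → Bool → Bool,
      (∀ c' : Fin 3 → Bool,
        inner' (tensor fun i => v i (c' i) (g i (c' i))) ψ ≠ 0) ∧
      ∀ i, g i (c i) = o i := by
  rcases hψ with h | h | h | h <;> subst h
  · refine main_core v hv _ 0 1 false (by decide) (by decide) (by decide) ?_ c o ho
    intro w
    have hD : DeltaP1 = fun s => if s 2 = xor false (s 0) then (1/2 : ℂ) else 0 := by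
      funext s; simp [DeltaP1]
    rw [hD]
    exact fact01 false w
  · refine main_core v hv _ 1 0 false (by decide) (by decide) (by decide) ?_ c o ho
    intro w
    have hD : DeltaP2 = fun s => if s 2 = xor false (s 1) then (1/2 : ℂ) else 0 := by
      funext s; simp [DeltaP2]
    rw [hD]
    exact fact10 false w
  · refine main_core v hv _ 0 1 true (by decide) (by decide) (by decide) ?_ c o ho
    intro w
    have hD : DeltaM1 = fun s => if s 2 = xor true (s 0) then (1/2 : ℂ) else 0 := by
      funext s; simp [DeltaM1]
    rw [hD]
    exact fact01 true w
  · refine main_core v hv _ 1 0 true (by decide) (by decide) (by decide) ?_ c o ho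
    intro w
    have hD : DeltaM2 = fun s => if s 2 = xor true (s 1) then (1/2 : ℂ) else 0 := by
      funext s; simp [DeltaM2]
    rw [hD]
    exact fact10 true w
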